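/- With the notation of the determinant lemma (k, ℓ ≥ 2 with k+ℓ odd, 0 < x_1 < … < x_k, 0 < y_1 < … < y_ℓ, and D_{k,ℓ}(τ) the (k+ℓ)×(k+ℓ) determinant with rows (1,…,1,0,…,0), (x_1τ,…,x_kτ,0,…,0), (0,…,0,1,…,1), (0,…,0,y_1,…,y_ℓ), and (x_1^pτ^p,…,x_k^pτ^p,y_1^p,…,y_ℓ^p) for p = 2,…,k+ℓ−3), one has lim_{τ→0⁺} D_{k,ℓ}(τ)/τ^{k(k−1)/2} = VD(x) · GVD(y; μ), where VD(x) = ∏_{1≤i<j≤k}(x_j − x_i) is the Vandermonde determinant of (x_1,…,x_k), and GVD(y; μ) = det( y_j^{μ_i} )_{1≤i,j≤ℓ} is the generalized Vandermonde determinant with exponent vector μ = (0, 1, k, k+1, …, k+ℓ−3); in particular this limit is strictly positive. -/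

import Mathlib

open Set Pointwise

noncomputable section

/-- Euclidean `d`-space `E^d`, modeled as `Fin d → ℝ`. -/
abbrev Euc (d : ℕ) : Type := Fin d → ℝ

/-- The (affine) dimension of a subset of Euclidean space: the dimension of its affine hull. -/
def setDim {d : ℕ} (F : Set (Euc d)) : ℕ :=
  Module.finrank ℝ (affineSpan ℝ F).direction

/-- A (convex) polytope: the convex hull of a finite point set. -/
def IsPolytope {d : ℕ} (P : Set (Euc d)) : Prop :=
  ∃ S : Set (Euc d), S.Finite ∧ P = convexHull ℝ S

/-- `F` is a proper (nonempty) face of `P`: `F` is an exposed face of `P` (the intersection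
of `P` with a supporting hyperplane) which is nonempty and different from `P` itself. -/
def IsProperFaceOf {d : ℕ} (P F : Set (Euc d)) : Prop :=
  IsExposed ℝ P F ∧ F ≠ P ∧ F.Nonempty

/-- The vertex set of a polytope: its set of extreme points. -/
def vertSet {d : ℕ} (P : Set (Euc d)) : Set (Euc d) :=
  Set.extremePoints ℝ P

/-- The number of vertices of a polytope. -/
def vertCount {d : ℕ} (P : Set (Euc d)) : ℕ := (vertSet P).ncard

/-- `faceCount P k` is `f_k(P)`, the number of `k`-dimensional (proper) faces of `P`. -/
def faceCount {d : ℕ} (P : Set (Euc d)) (k : ℕ) : ℕ :=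
  {F : Set (Euc d) | IsProperFaceOf P F ∧ setDim F = k}.ncard

/-- The moment curve `t ↦ (t, t², …, t^δ)` in `E^δ`. -/
def momentCurve (δ : ℕ) (t : ℝ) : Euc δ := fun i => t ^ ((i : ℕ) + 1)

/-- A standard realization of the cyclic `δ`-polytope `C_δ(n)` with `n` vertices:
the convex hull of `n` distinct points on the moment curve. -/
def cyclicPolytope (δ n : ℕ) : Set (Euc δ) :=
  convexHull ℝ (momentCurve δ '' (Set.range fun j : Fin n => (j : ℝ) + 1))

/-- `S` is the vertex set of a proper face of `P` of dimension `|S| - 1`. -/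
def IsSimplexFaceVertexSet {d : ℕ} (P S : Set (Euc d)) : Prop :=
  ∃ F : Set (Euc d), IsProperFaceOf P F ∧ vertSet F = S ∧ setDim F + 1 = S.ncard

/-- A polytope `P` is `(V1; k)`-bineighborly: `V1` is a nonempty proper subset of the vertex
set of `P`, and for all nonempty `S1 ⊆ V1` and `S2 ⊆ V ∖ V1` with `|S1| + |S2| ≤ k`,
the set `S1 ∪ S2` is the vertex set of a face of `P` of dimension `|S1| + |S2| - 1`. -/
def PolytopeBineighborly {d : ℕ} (P V1 : Set (Euc d)) (k : ℕ) : Prop :=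
  V1.Nonempty ∧ V1 ⊂ vertSet P ∧
    ∀ S1 S2 : Set (Euc d), S1.Nonempty → S2.Nonempty →
      S1 ⊆ V1 → S2 ⊆ vertSet P \ V1 → S1.ncard + S2.ncard ≤ k →
        IsSimplexFaceVertexSet P (S1 ∪ S2)

/-- A polytope is `k`-neighborly if every nonempty subset of at most `k` of its vertices is
the vertex set of a face. -/
def PolytopeNeighborly {d : ℕ} (P : Set (Euc d)) (k : ℕ) : Prop :=
  ∀ S : Set (Euc d), S ⊆ vertSet P → S.Nonempty → S.ncard ≤ k →
    ∃ F : Set (Euc d), IsProperFaceOf P F ∧ vertSet F = S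

/-- Embed `E^d` into the hyperplane `{x_{d+1} = c}` of `E^{d+1}`. -/
def lift {d : ℕ} (c : ℝ) (x : Euc d) : Euc (d + 1) := Fin.snoc x c

/-- The Cayley polytope `CH_{d+1}({P1, P2})` of `P1` embedded in `{x_{d+1} = 0}` and
`P2` embedded in `{x_{d+1} = 1}`. -/
def cayley {d : ℕ} (P1 P2 : Set (Euc d)) : Set (Euc (d + 1)) :=
  convexHull ℝ (lift 0 '' P1 ∪ lift 1 '' P2)

/-- `ubTerm n d k = binom (n - d - 2 + k) k` (equal to the true binomial for `n ≥ d + 1`). -/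
def ubTerm (n d k : ℕ) : ℕ := (n + k - (d + 2)).choose k

/-- The upper bound for `f_{k-1}(P1 ⊕ P2)`:
`f_k(C_{d+1}(n1+n2)) - ∑_{i=0}^{⌊(d+1)/2⌋} binom(d+1-i, k+1-i) (binom(n1-d-2+i, i) + binom(n2-d-2+i, i))`. -/
def minkBound (d n1 n2 k : ℕ) : ℤ :=
  (faceCount (cyclicPolytope (d + 1) (n1 + n2)) k : ℤ)
    - ∑ i ∈ Finset.range ((d + 1) / 2 + 1),
        (if i ≤ k + 1 then ((d + 1 - i).choose (k + 1 - i) : ℤ) else 0)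
          * ((ubTerm n1 d i : ℤ) + (ubTerm n2 d i : ℤ))

/-- A polytopal complex in `E^N`: a finite nonempty collection of polytopes containing `∅`,
closed under taking faces, such that pairwise intersections are faces of both. -/
structure PolyComplex (N : ℕ) where
  faces : Set (Set (Euc N))
  finite_faces : faces.Finite
  empty_mem : ∅ ∈ faces
  polytope_mem : ∀ F ∈ faces, IsPolytope F
  down_closed : ∀ F ∈ faces, ∀ G : Set (Euc N), IsExposed ℝ F G → G ∈ faces
  inter_face : ∀ F ∈ faces, ∀ G ∈ faces, IsExposed ℝ F (F ∩ G) ∧ IsExposed ℝ G (F ∩ G)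

namespace PolyComplex

/-- The vertex set of a complex: its `0`-dimensional faces. -/
def verts {N : ℕ} (C : PolyComplex N) : Set (Euc N) := {v : Euc N | {v} ∈ C.faces}

/-- `C` is a (pure-dimension-bounded) `d`-complex: all faces have dimension at most `d`
and some face has dimension exactly `d`. -/
def IsDComplex {N : ℕ} (C : PolyComplex N) (d : ℕ) : Prop :=
  (∀ F ∈ C.faces, setDim F ≤ d) ∧ ∃ F ∈ C.faces, setDim F = d

/-- A complex `C` is `(V1; k)`-bineighborly. -/
def Bineighborly {N : ℕ} (C : PolyComplex N) (V1 : Set (Euc N)) (k : ℕ) : Prop :=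
  V1.Nonempty ∧ V1 ⊂ C.verts ∧
    ∀ S1 S2 : Set (Euc N), S1.Nonempty → S2.Nonempty →
      S1 ⊆ V1 → S2 ⊆ C.verts \ V1 → S1.ncard + S2.ncard ≤ k →
        ∃ F ∈ C.faces, vertSet F = S1 ∪ S2 ∧ setDim F + 1 = S1.ncard + S2.ncard

/-- A complex is `k`-neighborly if every nonempty subset of at most `k` of its vertices is
the vertex set of a face. -/
def Neighborly {N : ℕ} (C : PolyComplex N) (k : ℕ) : Prop :=
  ∀ S : Set (Euc N), S ⊆ C.verts → S.Nonempty → S.ncard ≤ k →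
    ∃ F ∈ C.faces, vertSet F = S

end PolyComplex

/-- `F` is a simplex: the convex hull of an affinely independent finite point set. -/
def IsSimplexSet {d : ℕ} (F : Set (Euc d)) : Prop :=
  ∃ S : Finset (Euc d),
    AffineIndependent ℝ (fun v : {x // x ∈ S} => (v : Euc d)) ∧
      F = convexHull ℝ (S : Set (Euc d))

/-- A simplicial polytope: all its proper faces are simplices. -/
def IsSimplicialPolytope {d : ℕ} (P : Set (Euc d)) : Prop :=
  IsPolytope P ∧ ∀ F : Set (Euc d), IsProperFaceOf P F → IsSimplexSet F

/-- The collection `𝓕` of proper faces of the Cayley polytope of `P1`, `P2` having at least one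
vertex in (the embedded copy of) each of `P1` and `P2`. -/
def cayleyFaces {d : ℕ} (P1 P2 : Set (Euc d)) : Set (Set (Euc (d + 1))) :=
  {F : Set (Euc (d + 1)) | IsProperFaceOf (cayley P1 P2) F ∧
    (vertSet F ∩ lift 0 '' P1).Nonempty ∧ (vertSet F ∩ lift 1 '' P2).Nonempty}

/-- `fFm1 P1 P2 k = f_{k-1}(𝓕)`, with the convention `f_{-1}(𝓕) = -1`. -/
def fFm1 {d : ℕ} (P1 P2 : Set (Euc d)) : ℕ → ℤ
  | 0 => -1
  | (k + 1) => (({F ∈ cayleyFaces P1 P2 | setDim F = k} : Set (Set (Euc (d + 1)))).ncard : ℤ)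

/-- The `h`-vector of `𝓕`: `h_k(𝓕) = ∑_{i=0}^{k} (-1)^{k-i} binom(d+1-i, d+1-k) f_{i-1}(𝓕)`. -/
def hF {d : ℕ} (P1 P2 : Set (Euc d)) (k : ℕ) : ℤ :=
  ∑ i ∈ Finset.range (k + 1),
    (-1 : ℤ) ^ (k - i) * ((d + 1 - i).choose (d + 1 - k) : ℤ) * fFm1 P1 P2 i

/-- `fBdm1 P k = f_{k-1}(∂P)`, with `f_{-1}(∂P) = 1`. -/
def fBdm1 {d : ℕ} (P : Set (Euc d)) : ℕ → ℤ
  | 0 => 1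
  | (k + 1) => (faceCount P k : ℤ)

/-- The `h`-vector of the boundary complex of a `d`-polytope `P ⊆ E^d`:
`h_k(∂P) = ∑_{i=0}^{k} (-1)^{k-i} binom(d-i, d-k) f_{i-1}(∂P)`. -/
def hBd {d : ℕ} (P : Set (Euc d)) (k : ℕ) : ℤ :=
  ∑ i ∈ Finset.range (k + 1),
    (-1 : ℤ) ^ (k - i) * ((d - i).choose (d - k) : ℤ) * fBdm1 P i

/-- The `g`-vector of `∂P`: `g_0 = h_0 (= 1)` and `g_k = h_k - h_{k-1}`, with the
convention `h_{d+1}(∂P) = 0`. -/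
def gBd {d : ℕ} (P : Set (Euc d)) (k : ℕ) : ℤ :=
  (if k ≤ d then hBd P k else 0)
    - (if k = 0 then 0 else if k - 1 ≤ d then hBd P (k - 1) else 0)

/-- `fCycm1 δ n k = f_{k-1}(C_δ(n))`, with `f_{-1} = 1`. -/
def fCycm1 (δ n k : ℕ) : ℤ :=
  if k = 0 then 1 else (faceCount (cyclicPolytope δ n) (k - 1) : ℤ)

/-- The upper bound for `f_{k-1}(𝓕)`:
`f_{k-1}(C_{d+1}(n1+n2)) - ∑_{i=0}^{⌊(d+1)/2⌋} binom(d+1-i, k-i)(binom(n1-d-2+i,i)+binom(n2-d-2+i,i))`. -/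
def cayleyBound (d n1 n2 k : ℕ) : ℤ :=
  fCycm1 (d + 1) (n1 + n2) k
    - ∑ i ∈ Finset.range ((d + 1) / 2 + 1),
        (if i ≤ k then ((d + 1 - i).choose (k - i) : ℤ) else 0)
          * ((ubTerm n1 d i : ℤ) + (ubTerm n2 d i : ℤ))

/-- The moment-like curve `γ1(t; ζ) = (t, ζ t^d, t², t³, …, t^{d-1}, 0)` in `E^{d+1}`. -/
def gamma1 (d : ℕ) (ζ t : ℝ) : Euc (d + 1) := fun i =>
  if (i : ℕ) = 0 then t
  else if (i : ℕ) = 1 then ζ * t ^ d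
  else if (i : ℕ) = d then 0
  else t ^ (i : ℕ)

/-- The moment-like curve `γ2(s; ζ) = (ζ s^d, s, s², s³, …, s^{d-1}, 1)` in `E^{d+1}`. -/
def gamma2 (d : ℕ) (ζ s : ℝ) : Euc (d + 1) := fun i =>
  if (i : ℕ) = 0 then ζ * s ^ d
  else if (i : ℕ) = 1 then s
  else if (i : ℕ) = d then 1
  else s ^ (i : ℕ)

/-- The `(k+ℓ) × (k+ℓ)` matrix whose determinant is `D_{k,ℓ}(τ)`: rows are
`(1,…,1,0,…,0)`, `(x₁τ,…,x_kτ,0,…,0)`, `(0,…,0,1,…,1)`, `(0,…,0,y₁,…,y_ℓ)` and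
`(x₁^pτ^p,…,x_k^pτ^p,y₁^p,…,y_ℓ^p)` for `p = 2, …, k+ℓ-3`. -/
def Dmat (k l : ℕ) (x : Fin k → ℝ) (y : Fin l → ℝ) (τ : ℝ) :
    Matrix (Fin (k + l)) (Fin (k + l)) ℝ :=
  Matrix.of fun r c =>
    have hcl : (c : ℕ) < k + l := c.isLt
    if hc : (c : ℕ) < k then
      if (r : ℕ) = 0 then 1
      else if (r : ℕ) = 1 then x ⟨(c : ℕ), hc⟩ * τ
      else if (r : ℕ) = 2 then 0
      else if (r : ℕ) = 3 then 0
      else (x ⟨(c : ℕ), hc⟩ * τ) ^ ((r : ℕ) - 2)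
    else
      have hck : (c : ℕ) - k < l := by omega
      if (r : ℕ) = 0 then 0
      else if (r : ℕ) = 1 then 0
      else if (r : ℕ) = 2 then 1
      else if (r : ℕ) = 3 then y ⟨(c : ℕ) - k, hck⟩
      else y ⟨(c : ℕ) - k, hck⟩ ^ ((r : ℕ) - 2)

/-- The exponent vector `μ = (0, 1, k, k+1, …, k+ℓ-3)`. -/
def muExp (k i : ℕ) : ℕ := if i = 0 then 0 else if i = 1 then 1 else k + i - 2

/-- The Vandermonde determinant `VD(x) = ∏_{i<j} (x_j - x_i)`. -/
def VDprod {k : ℕ} (x : Fin k → ℝ) : ℝ :=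
  ∏ p ∈ Finset.univ.filter (fun p : Fin k × Fin k => p.1 < p.2), (x p.2 - x p.1)

/-- The generalized Vandermonde determinant `GVD(y; μ) = det (y_j^{μ_i})` with exponent
vector `μ = (0, 1, k, k+1, …, k+ℓ-3)`. -/
def GVDdet (k : ℕ) {l : ℕ} (y : Fin l → ℝ) : ℝ :=
  (Matrix.of fun i j : Fin l => y j ^ muExp k (i : ℕ)).det

/-- `binom(a, b)` for an integer lower index, zero when `b < 0` or `b > a`. -/
def zchoose (a : ℕ) (b : ℤ) : ℝ := if 0 ≤ b then (a.choose b.toNat : ℝ) else 0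

/-!
Reordering the rows of `D(τ)` by an even permutation gives the block matrix
`[[A(τ), B], [C(τ), E]]`, where `A(τ)` is the (transposed) Vandermonde matrix of `x τ` and
`E` is the generalized Vandermonde matrix of `y` with exponents `μ`. By the Schur complement,
`D(τ) = det A(τ) · det (E - C(τ) A(τ)⁻¹ B)` with `det A(τ) = τ^{k(k-1)/2} VD(x)`, and the
`(j, i)` entry of `C(τ) A(τ)⁻¹` is a constant times `τ^{k+j-2-i}`: the powers of `τ` in `C`
exceed those in `A`, so this matrix tends to `0`.

For the sign of `GVD(y; μ)`: by Descartes' rule of signs a nonzero combination of `ℓ` monomials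
has fewer than `ℓ` positive roots, so `GVD` does not vanish on the convex set of increasing
positive `y`; at `y_j = 2^j` it is an ordinary Vandermonde determinant, which is positive.
-/

namespace Polynomial

open Finset

theorem signVariations_lt_card_support {R : Type*} [Semiring R] [LinearOrder R] {P : R[X]}
    (hP : P ≠ 0) : signVariations P < #P.support := by
  by_cases hE : P.eraseLead = 0
  · have hmon : P = monomial P.natDegree P.leadingCoeff := by
      simpa [hE] using (eraseLead_add_monomial_natDegree_leadingCoeff P).symm
    rw [hmon, signVariations_monomial, ← hmon]
    exact card_pos.2 (nonempty_support_iff.2 hP)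
  · calc signVariations P ≤ signVariations P.eraseLead + 1 := signVariations_le_eraseLead_succ P
      _ < #P.eraseLead.support + 1 := by gcongr; exact signVariations_lt_card_support hE
      _ = #P.support := card_support_eraseLead_add_one hP
termination_by #P.support
decreasing_by exact eraseLead_support_card_lt hP

variable {R : Type*} [CommRing R] [LinearOrder R] [IsStrictOrderedRing R]

theorem card_lt_card_support_of_isRoot {P : R[X]} (hP : P ≠ 0) {n : ℕ} {t : Fin n → R}
    (ht : Function.Injective t) (ht0 : ∀ j, 0 < t j) (hroot : ∀ j, P.IsRoot (t j)) :
    n < #P.support :=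
  calc n = #(univ.image t) := by rw [card_image_of_injective _ ht, card_univ, Fintype.card_fin]
    _ ≤ #(P.roots.filter (0 < ·)).toFinset := card_le_card fun a ha => by
        obtain ⟨j, -, rfl⟩ := mem_image.1 ha
        simpa [hP] using ⟨hroot j, ht0 j⟩
    _ ≤ P.roots.countP (0 < ·) := by
        rw [Multiset.countP_eq_card_filter]; exact Multiset.toFinset_card_le _
    _ < #P.support := (roots_countP_pos_le_signVariations P).trans_lt
        (signVariations_lt_card_support hP)

end Polynomial

open Polynomial Finset in
theorem Matrix.det_of_pow_ne_zero {R : Type*} [CommRing R] [LinearOrder R]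
    [IsStrictOrderedRing R] {n : ℕ} {μ : Fin n → ℕ} (hμ : Function.Injective μ) {y : Fin n → R}
    (hy : Function.Injective y) (hy0 : ∀ j, 0 < y j) :
    (Matrix.of fun i j => y j ^ μ i).det ≠ 0 := by
  intro hdet
  obtain ⟨c, hc, hker⟩ := Matrix.exists_vecMul_eq_zero_iff.2 hdet
  set P : R[X] := ∑ i, monomial (μ i) (c i)
  have hcoeff : ∀ i, P.coeff (μ i) = c i := fun i => by
    simp [P, coeff_monomial, hμ.eq_iff]
  have hsupp : P.support ⊆ univ.image μ := fun d hd => by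
    by_contra hd'
    refine mem_support_iff.1 hd ?_
    rw [finsetSum_coeff]
    refine sum_eq_zero fun i _ => ?_
    rw [coeff_monomial, if_neg fun h => hd' (mem_image.2 ⟨i, mem_univ _, h⟩)]
  have hP : P ≠ 0 := fun h => hc (funext fun i => by simpa [h] using (hcoeff i).symm)
  have hroot : ∀ j, P.IsRoot (y j) := fun j => by
    simpa [P, eval_finsetSum, Matrix.vecMul, dotProduct] using congrFun hker j
  exact (card_lt_card_support_of_isRoot hP hy hy0 hroot).not_ge
    ((Finset.card_le_card hsupp).trans (card_image_le.trans (by simp)))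

theorem Matrix.det_vandermonde_pos {n : ℕ} {v : Fin n → ℝ} (hv : StrictMono v) :
    0 < (Matrix.vandermonde v).det := by
  rw [Matrix.det_vandermonde]
  exact Finset.prod_pos fun i _ => Finset.prod_pos fun j hj =>
    sub_pos.2 (hv (Finset.mem_Ioi.1 hj))

theorem Matrix.det_of_pow_pos {n : ℕ} {μ : Fin n → ℕ} (hμ : StrictMono μ) {y : Fin n → ℝ}
    (hy : StrictMono y) (hy0 : ∀ j, 0 < y j) :
    0 < (Matrix.of fun i j => y j ^ μ i).det := by
  set S : Set (Fin n → ℝ) := {z | StrictMono z ∧ ∀ j, 0 < z j}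
  set f : (Fin n → ℝ) → ℝ := fun z => (Matrix.of fun i j => z j ^ μ i).det
  have hS : Convex ℝ S := convex_iff_forall_pos.2 fun z hz w hw a b ha hb _ =>
    ⟨fun i j hij => by
      simpa using add_lt_add (mul_lt_mul_of_pos_left (hz.1 hij) ha)
        (mul_lt_mul_of_pos_left (hw.1 hij) hb),
     fun j => by simpa using add_pos (mul_pos ha (hz.2 j)) (mul_pos hb (hw.2 j))⟩
  have hf : Continuous f := by fun_prop
  -- at `z j = 2 ^ j` the matrix is the Vandermonde matrix of the points `2 ^ μ i`
  set z₀ : Fin n → ℝ := fun j => 2 ^ (j : ℕ)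
  have hz₀ : z₀ ∈ S := ⟨(pow_right_strictMono₀ one_lt_two).comp Fin.val_strictMono,
    fun j => by positivity⟩
  have hfz₀ : 0 < f z₀ := by
    have : (Matrix.of fun i j => z₀ j ^ μ i) = Matrix.vandermonde fun i => (2 : ℝ) ^ μ i := by
      ext i j; simp [z₀, Matrix.vandermonde_apply, pow_right_comm]
    rw [show f z₀ = _ from congrArg Matrix.det this]
    exact Matrix.det_vandermonde_pos ((pow_right_strictMono₀ one_lt_two).comp hμ)
  by_contra hneg
  obtain ⟨z, hz, hfz⟩ := hS.isPreconnected.intermediate_value ⟨hy, hy0⟩ hz₀ hf.continuousOn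
    ⟨not_lt.1 hneg, hfz₀.le⟩
  exact Matrix.det_of_pow_ne_zero hμ.injective hz.1.injective hz.2 hfz

theorem Matrix.vandermonde_mul_const {R : Type*} [CommRing R] {n : ℕ} (v : Fin n → R) (a : R) :
    Matrix.vandermonde (fun i => v i * a)
      = Matrix.vandermonde v * Matrix.diagonal fun j : Fin n => a ^ (j : ℕ) := by
  ext i j
  simp [Matrix.vandermonde_apply, mul_pow]

theorem Matrix.det_vandermonde_mul_const {R : Type*} [CommRing R] {n : ℕ} (v : Fin n → R)
    (a : R) :
    (Matrix.vandermonde fun i => v i * a).det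
      = a ^ (n * (n - 1) / 2) * (Matrix.vandermonde v).det := by
  rw [Matrix.vandermonde_mul_const, Matrix.det_mul, Matrix.det_diagonal,
    Finset.prod_pow_eq_pow_sum, Fin.sum_univ_eq_sum_range (fun j => j), Finset.sum_range_id,
    mul_comm]

theorem VDprod_eq_det_vandermonde {k : ℕ} (x : Fin k → ℝ) :
    VDprod x = (Matrix.vandermonde x).det := by
  rw [VDprod, Matrix.det_vandermonde, Finset.prod_filter, Fintype.prod_prod_type]
  congr! 1 with i
  rw [← Finset.prod_filter]
  congr 1
  ext j; simp

theorem VDprod_pos {k : ℕ} {x : Fin k → ℝ} (hx : StrictMono x) : 0 < VDprod x :=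
  VDprod_eq_det_vandermonde x ▸ Matrix.det_vandermonde_pos hx

theorem muExp_strictMono {k : ℕ} (hk : 2 ≤ k) : StrictMono (muExp k) := by
  intro a b hab
  simp only [muExp]
  split_ifs <;> omega

theorem GVDdet_pos {k l : ℕ} (hk : 2 ≤ k) {y : Fin l → ℝ} (hy : StrictMono y)
    (hy0 : ∀ j, 0 < y j) : 0 < GVDdet k y :=
  Matrix.det_of_pow_pos ((muExp_strictMono hk).comp Fin.val_strictMono) hy hy0

open scoped Matrix

def dmatUpperRight (k : ℕ) {l : ℕ} (y : Fin l → ℝ) : Matrix (Fin k) (Fin l) ℝ :=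
  Matrix.of fun i c => if (i : ℕ) < 2 then 0 else y c ^ (i : ℕ)

def dmatLowerLeft {k : ℕ} (l : ℕ) (x : Fin k → ℝ) : Matrix (Fin l) (Fin k) ℝ :=
  Matrix.of fun j c => if (j : ℕ) < 2 then 0 else x c ^ (k + j - 2)

def gvdMatrix (k : ℕ) {l : ℕ} (y : Fin l → ℝ) : Matrix (Fin l) (Fin l) ℝ :=
  Matrix.of fun i j => y j ^ muExp k i

/-- The cycle `(2 3 ⋯ k+1)`. Its square moves rows `2, 3` of `Dmat` below rows
`0, 1, 4, …, k+1`, and being a square it is an even permutation. -/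
def rowCycle (k : ℕ) {l : ℕ} (hl : 2 ≤ l) : Equiv.Perm (Fin (k + l)) where
  toFun i := ⟨if (i : ℕ) < 2 ∨ k + 1 < i then i else if (i : ℕ) = k + 1 then 2 else i + 1,
    by split_ifs <;> omega⟩
  invFun i := ⟨if (i : ℕ) < 2 ∨ k + 1 < i then i else if (i : ℕ) = 2 then k + 1 else i - 1,
    by split_ifs <;> omega⟩
  left_inv i := by ext; simp only; split_ifs <;> omega
  right_inv i := by ext; simp only; split_ifs <;> omega

theorem rowCycle_sq_castAdd {k l : ℕ} (hl : 2 ≤ l) (i : Fin k) :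
    ((rowCycle k hl ^ 2) (Fin.castAdd l i) : ℕ)
      = if (i : ℕ) < 2 then (i : ℕ) else (i : ℕ) + 2 := by
  simp only [sq, Equiv.Perm.mul_apply, rowCycle, Equiv.coe_fn_mk, Fin.val_castAdd]
  split_ifs <;> omega

theorem rowCycle_sq_natAdd {k l : ℕ} (hk : 2 ≤ k) (hl : 2 ≤ l) (j : Fin l) :
    ((rowCycle k hl ^ 2) (Fin.natAdd k j) : ℕ)
      = if (j : ℕ) < 2 then (j : ℕ) + 2 else k + (j : ℕ) := by
  simp only [sq, Equiv.Perm.mul_apply, rowCycle, Equiv.coe_fn_mk, Fin.val_natAdd]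
  split_ifs <;> omega

theorem Dmat_submatrix_rowCycle_sq {k l : ℕ} (hk : 2 ≤ k) (hl : 2 ≤ l) (x : Fin k → ℝ)
    (y : Fin l → ℝ) (τ : ℝ) :
    (Dmat k l x y τ).submatrix (fun i => (rowCycle k hl ^ 2) (finSumFinEquiv i)) finSumFinEquiv
      = Matrix.fromBlocks (Matrix.vandermonde (fun c => x c * τ))ᵀ (dmatUpperRight k y)
          (dmatLowerLeft l fun c => x c * τ) (gvdMatrix k y) := by
  ext (i | j) (c | d) <;>
    simp only [Matrix.submatrix_apply, finSumFinEquiv_apply_left, finSumFinEquiv_apply_right,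
      Matrix.fromBlocks_apply₁₁, Matrix.fromBlocks_apply₁₂, Matrix.fromBlocks_apply₂₁,
      Matrix.fromBlocks_apply₂₂, Dmat, dmatUpperRight, dmatLowerLeft, gvdMatrix, muExp,
      Matrix.transpose_apply, Matrix.vandermonde_apply, Matrix.of_apply, rowCycle_sq_castAdd,
      rowCycle_sq_natAdd hk, Fin.val_castAdd, Fin.val_natAdd, Fin.is_lt, Fin.eta, dite_true,
      add_tsub_cancel_left, show ∀ d : ℕ, ¬ k + d < k from fun d => by omega, dite_false] <;>
    split_ifs <;> first | omega | simp_all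

theorem det_Dmat_eq_det_fromBlocks {k l : ℕ} (hk : 2 ≤ k) (hl : 2 ≤ l) (x : Fin k → ℝ)
    (y : Fin l → ℝ) (τ : ℝ) :
    (Dmat k l x y τ).det
      = (Matrix.fromBlocks (Matrix.vandermonde (fun c => x c * τ))ᵀ (dmatUpperRight k y)
          (dmatLowerLeft l fun c => x c * τ) (gvdMatrix k y)).det := by
  have h := Matrix.det_submatrix_equiv_self finSumFinEquiv
    ((Dmat k l x y τ).submatrix ⇑(rowCycle k hl ^ 2) id)
  rw [Matrix.det_permute, map_pow, Int.units_sq, Units.val_one, Int.cast_one, one_mul] at h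
  rw [← Dmat_submatrix_rowCycle_sq hk hl, ← h]
  rfl

theorem dmatLowerLeft_mul_const {k : ℕ} (l : ℕ) (x : Fin k → ℝ) (τ : ℝ) :
    dmatLowerLeft l (fun c => x c * τ)
      = Matrix.diagonal (fun j : Fin l => τ ^ (k + j - 2)) * dmatLowerLeft l x := by
  ext j c
  simp only [dmatLowerLeft, Matrix.diagonal_mul, Matrix.of_apply, mul_pow]
  split_ifs <;> ring

theorem dmatLowerLeft_mul_apply_of_lt_two {k l : ℕ} {m : Type*} [Fintype m] (x : Fin k → ℝ)
    (N : Matrix (Fin k) m ℝ) {j : Fin l} (hj : (j : ℕ) < 2) (i : m) :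
    (dmatLowerLeft l x * N) j i = 0 := by
  simp only [dmatLowerLeft, Matrix.mul_apply, Matrix.of_apply, if_pos hj, zero_mul,
    Finset.sum_const_zero]

theorem dmatLowerLeft_mul_inv_vandermonde {k l : ℕ} (x : Fin k → ℝ) {τ : ℝ} (hτ : τ ≠ 0) :
    dmatLowerLeft l (fun c => x c * τ) * (Matrix.vandermonde (fun c => x c * τ))ᵀ⁻¹
      = Matrix.of fun (j : Fin l) (i : Fin k) => τ ^ (k + (j : ℕ) - 2 - i) *
          (dmatLowerLeft l x * (Matrix.vandermonde x)ᵀ⁻¹) j i := by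
  have hinv : (Matrix.diagonal fun i : Fin k => τ ^ (i : ℕ))⁻¹
      = Matrix.diagonal fun i : Fin k => (τ ^ (i : ℕ))⁻¹ :=
    Matrix.inv_eq_right_inv (by rw [Matrix.diagonal_mul_diagonal]; simp [hτ])
  rw [dmatLowerLeft_mul_const, Matrix.vandermonde_mul_const, Matrix.transpose_mul,
    Matrix.diagonal_transpose, Matrix.mul_inv_rev, hinv, ← Matrix.mul_assoc,
    Matrix.mul_assoc (Matrix.diagonal _)]
  ext j i
  rw [Matrix.mul_diagonal, Matrix.diagonal_mul]
  by_cases hj : (j : ℕ) < 2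
  · simp [dmatLowerLeft_mul_apply_of_lt_two x _ hj]
  · rw [Matrix.of_apply, pow_sub₀ τ hτ (show (i : ℕ) ≤ k + j - 2 by omega)]
    ring

theorem tendsto_dmatLowerLeft_mul_inv_vandermonde {k l : ℕ} (x : Fin k → ℝ) :
    Filter.Tendsto
      (fun τ => dmatLowerLeft l (fun c => x c * τ) * (Matrix.vandermonde (fun c => x c * τ))ᵀ⁻¹)
      (nhdsWithin 0 {0}ᶜ) (nhds 0) := by
  set M := dmatLowerLeft l x * (Matrix.vandermonde x)ᵀ⁻¹
  set g : ℝ → Matrix (Fin l) (Fin k) ℝ := fun τ =>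
    Matrix.of fun (j : Fin l) (i : Fin k) => τ ^ (k + (j : ℕ) - 2 - i) * M j i
  have hg : Continuous g := by fun_prop
  have hg0 : g 0 = 0 := by
    ext j i
    by_cases hj : (j : ℕ) < 2
    · simp [g, M, dmatLowerLeft_mul_apply_of_lt_two x _ hj]
    · simp [g, zero_pow (show k + j - 2 - i ≠ 0 by omega)]
  refine Filter.Tendsto.congr' (eventually_nhdsWithin_of_forall fun τ hτ =>
    (dmatLowerLeft_mul_inv_vandermonde x hτ).symm) ?_
  have h := hg.tendsto 0
  rw [hg0] at h
  exact h.mono_left nhdsWithin_le_nhds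

theorem det_Dmat_eq {k l : ℕ} (hk : 2 ≤ k) (hl : 2 ≤ l) {x : Fin k → ℝ}
    (hx : Function.Injective x) (y : Fin l → ℝ) {τ : ℝ} (hτ : τ ≠ 0) :
    (Dmat k l x y τ).det = τ ^ (k * (k - 1) / 2) * VDprod x *
      (gvdMatrix k y - dmatLowerLeft l (fun c => x c * τ) *
        (Matrix.vandermonde (fun c => x c * τ))ᵀ⁻¹ * dmatUpperRight k y).det := by
  have hdet :
      (Matrix.vandermonde (fun c => x c * τ))ᵀ.det = τ ^ (k * (k - 1) / 2) * VDprod x := by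
    rw [Matrix.det_transpose, Matrix.det_vandermonde_mul_const, VDprod_eq_det_vandermonde]
  have hVD : VDprod x ≠ 0 :=
    VDprod_eq_det_vandermonde x ▸ Matrix.det_vandermonde_ne_zero_iff.2 hx
  have := Matrix.invertibleOfIsUnitDet _
    (hdet ▸ isUnit_iff_ne_zero.2 (mul_ne_zero (pow_ne_zero _ hτ) hVD))
  rw [det_Dmat_eq_det_fromBlocks hk hl, Matrix.det_fromBlocks₁₁, Matrix.invOf_eq_nonsing_inv,
    hdet]

theorem statement_17_general (k l : ℕ) (hk : 2 ≤ k) (hl : 2 ≤ l)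
    (x : Fin k → ℝ) (y : Fin l → ℝ)
    (hx : StrictMono x)
    (hy0 : ∀ j, 0 < y j) (hy : StrictMono y) :
    Filter.Tendsto (fun τ : ℝ => (Dmat k l x y τ).det / τ ^ (k * (k - 1) / 2))
        (nhdsWithin 0 (Set.Ioi 0)) (nhds (VDprod x * GVDdet k y))
      ∧ 0 < VDprod x * GVDdet k y := by
  refine ⟨?_, mul_pos (VDprod_pos hx) (GVDdet_pos hk hy hy0)⟩
  have hcont : Continuous fun M : Matrix (Fin l) (Fin k) ℝ =>
      VDprod x * (gvdMatrix k y - M * dmatUpperRight k y).det := by fun_prop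
  have hlim := (hcont.tendsto 0).comp ((tendsto_dmatLowerLeft_mul_inv_vandermonde x).mono_left
    (nhdsWithin_mono _ fun τ (hτ : 0 < τ) => hτ.ne'))
  rw [Matrix.zero_mul, sub_zero] at hlim
  refine hlim.congr' (eventually_nhdsWithin_of_forall fun τ (hτ : 0 < τ) => ?_)
  dsimp only [Function.comp_apply]
  rw [det_Dmat_eq hk hl hx.injective y hτ.ne', mul_assoc,
    mul_div_cancel_left₀ _ (pow_ne_zero _ hτ.ne')]

/-- as `τ → 0⁺`, `D_{k,ℓ}(τ) / τ^{k(k-1)/2} → VD(x) · GVD(y; μ)` with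
`μ = (0, 1, k, k+1, …, k+ℓ-3)`, and this limit is strictly positive. -/
theorem statement_17 (k l : ℕ) (hk : 2 ≤ k) (hl : 2 ≤ l) (hodd : Odd (k + l))
    (x : Fin k → ℝ) (y : Fin l → ℝ)
    (hx0 : ∀ i, 0 < x i) (hx : StrictMono x)
    (hy0 : ∀ j, 0 < y j) (hy : StrictMono y) :
    Filter.Tendsto (fun τ : ℝ => (Dmat k l x y τ).det / τ ^ (k * (k - 1) / 2))
        (nhdsWithin 0 (Set.Ioi 0)) (nhds (VDprod x * GVDdet k y))
      ∧ 0 < VDprod x * GVDdet k y :=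
  statement_17_general k l hk hl x y hx hy0 hy
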